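/- Let Γ be a distance-regular graph. Then every Leonard completely regular code in Γ is a Q-polynomial completely regular code. -/

import Mathlib

open Finset Matrix

variable {V : Type*}

/-- `G` is a distance-regular graph with valency `k`, diameter `D`,
and intersection numbers `b i`, `c i`. -/
def IsDRG [Fintype V] (G : SimpleGraph V) [DecidableRel G.Adj]
    (k D : ℕ) (b c : ℕ → ℕ) : Prop :=
  G.Connected ∧ (∀ v, G.degree v = k) ∧
    (∀ x y : V, G.dist x y ≤ D) ∧ (∃ x y : V, G.dist x y = D) ∧
    ∀ i ≤ D, ∀ x y : V, G.dist x y = i →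
      ((Finset.univ.filter fun z => G.Adj y z ∧ G.dist x z = i - 1).card = c i ∧
       (Finset.univ.filter fun z => G.Adj y z ∧ G.dist x z = i + 1).card = b i)

/-- the distance from a vertex `v` to the code `C` -/
noncomputable def codeDist (G : SimpleGraph V) (C : Finset V) (v : V) : ℕ :=
  sInf {n | ∃ y ∈ C, G.dist v y = n}

/-- the characteristic vector of a code -/
def charVec [DecidableEq V] (C : Finset V) : V → ℂ :=
  fun v => if v ∈ C then 1 else 0

/-- the characteristic vector of the `i`-th cell `C_i` of the distance partition -/
noncomputable def cellVec (G : SimpleGraph V) (C : Finset V) (i : ℕ) : V → ℂ :=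
  fun v => if codeDist G C v = i then 1 else 0

/-- the `i`-th cell `C_i` of the distance partition, as a finset -/
noncomputable def cellFinset [Fintype V] (G : SimpleGraph V) (C : Finset V) (i : ℕ) : Finset V :=
  Finset.univ.filter fun v => codeDist G C v = i

/-- the number of neighbours of `v` lying in the `j`-th cell `C_j` -/
noncomputable def nbrsInCell [Fintype V] (G : SimpleGraph V) [DecidableRel G.Adj]
    (C : Finset V) (j : ℕ) (v : V) : ℕ :=
  (Finset.univ.filter fun z => G.Adj v z ∧ codeDist G C z = j).card

/-- `C` is a completely regular code with covering radius `ρ` and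
intersection numbers `γ i, α i, β i`. -/
def IsCRC [Fintype V] (G : SimpleGraph V) [DecidableRel G.Adj]
    (C : Finset V) (ρ : ℕ) (γ α β : ℕ → ℕ) : Prop :=
  C.Nonempty ∧ (∀ v, codeDist G C v ≤ ρ) ∧ (∃ v, codeDist G C v = ρ) ∧
    (∀ i, 1 ≤ i → i ≤ ρ → ∀ v, codeDist G C v = i → nbrsInCell G C (i - 1) v = γ i) ∧
    (∀ i ≤ ρ, ∀ v, codeDist G C v = i → nbrsInCell G C i v = α i) ∧
    (∀ i ≤ ρ, ∀ v, codeDist G C v = i → nbrsInCell G C (i + 1) v = β i)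

/-- the outer distribution module `𝔸x` of the code `C`, where `𝔸` is the
Bose-Mesner algebra (the algebra generated by the adjacency matrix) -/
noncomputable def outerModule [Fintype V] [DecidableEq V] (G : SimpleGraph V)
    [DecidableRel G.Adj] (C : Finset V) : Submodule ℂ (V → ℂ) :=
  Submodule.span ℂ {w | ∃ M ∈ Algebra.adjoin ℂ {G.adjMatrix ℂ}, w = M *ᵥ charVec C}

/-- the tridiagonal quotient matrix `U` of a completely regular code -/
def quotientMatrix (F : Type*) [Semiring F] (γ α β : ℕ → ℕ) (ρ : ℕ) :
    Matrix (Fin (ρ + 1)) (Fin (ρ + 1)) F :=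
  Matrix.of fun i j =>
    if (i : ℕ) = (j : ℕ) + 1 then (γ (i : ℕ) : F)
    else if (i : ℕ) = (j : ℕ) then (α (i : ℕ) : F)
    else if (j : ℕ) = (i : ℕ) + 1 then (β (i : ℕ) : F)
    else 0

/-- `θ` lists the distinct eigenvalues of `A` and `E j` is the orthogonal
projection onto the eigenspace of `θ j` (the primitive idempotents). -/
def PrimIdem [Fintype V] [DecidableEq V] (A : Matrix V V ℂ) (D : ℕ)
    (θ : Fin (D + 1) → ℝ) (E : Fin (D + 1) → Matrix V V ℂ) : Prop :=
  Function.Injective θ ∧ (∀ j, E j * E j = E j) ∧ (∀ j, (E j)ᴴ = E j) ∧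
    (∀ j, A * E j = (θ j : ℂ) • E j) ∧ (∑ j, E j = 1) ∧ (∀ j, E j ≠ 0)

/-- `q` are the Krein parameters of the primitive idempotents `E`. -/
def KreinRel [Fintype V] (D : ℕ) (E : Fin (D + 1) → Matrix V V ℂ)
    (q : Fin (D + 1) → Fin (D + 1) → Fin (D + 1) → ℝ) : Prop :=
  ∀ i j, Matrix.hadamard (E i) (E j) = (Fintype.card V : ℂ)⁻¹ • ∑ l, (q i j l : ℂ) • E l

/-- the Krein parameters satisfy the `Q`-polynomial condition with respect to the
given ordering of the primitive idempotents -/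
def QPolyKrein (D : ℕ) (q : Fin (D + 1) → Fin (D + 1) → Fin (D + 1) → ℝ) : Prop :=
  ∀ i j l : Fin (D + 1),
    (¬(((i : ℤ) - (j : ℤ)).natAbs ≤ (l : ℕ) ∧ (l : ℕ) ≤ (i : ℕ) + (j : ℕ)) → q i j l = 0) ∧
    (((l : ℕ) = ((i : ℤ) - (j : ℤ)).natAbs ∨ (l : ℕ) = (i : ℕ) + (j : ℕ)) → q i j l ≠ 0)

/-- a matrix is irreducible tridiagonal if all entries at distance more than one from
the diagonal vanish and all sub- and super-diagonal entries are nonzero -/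
def IrredTridiag {n : ℕ} {F : Type*} [Zero F] (M : Matrix (Fin n) (Fin n) F) : Prop :=
  (∀ i j : Fin n, 1 < (((i : ℕ) : ℤ) - ((j : ℕ) : ℤ)).natAbs → M i j = 0) ∧
  (∀ i j : Fin n, (((i : ℕ) : ℤ) - ((j : ℕ) : ℤ)).natAbs = 1 → M i j ≠ 0)

/-- `C` is a Leonard completely regular code with respect to the (nontrivial)
eigenvalue `θ t`: for some ordering `σ` of the basis `ℬ = {E_j x ≠ 0}` of the outer
distribution module, the matrix representing `y ↦ (E t x) ∘ y` is irreducible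
tridiagonal. -/
def IsLeonardWrt [Fintype V] [DecidableEq V] (D ρ : ℕ)
    (E : Fin (D + 1) → Matrix V V ℂ) (C : Finset V) (t : Fin (D + 1)) : Prop :=
  E t *ᵥ charVec C ≠ 0 ∧
    ∃ σ : Fin (ρ + 1) → Fin (D + 1), Function.Injective σ ∧
      (∀ j : Fin (D + 1), E j *ᵥ charVec C ≠ 0 ↔ j ∈ Set.range σ) ∧
      ∃ M : Matrix (Fin (ρ + 1)) (Fin (ρ + 1)) ℂ, IrredTridiag M ∧
        ∀ j, (E t *ᵥ charVec C) * (E (σ j) *ᵥ charVec C) =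
          ∑ l, M l j • (E (σ l) *ᵥ charVec C)

/-- `C` is a Leonard completely regular code: it is Leonard with respect to some
nontrivial eigenvalue. -/
def IsLeonard [Fintype V] [DecidableEq V] (D ρ : ℕ)
    (E : Fin (D + 1) → Matrix V V ℂ) (C : Finset V) : Prop :=
  ∃ t : Fin (D + 1), t ≠ 0 ∧ IsLeonardWrt D ρ E C t

/-- `C` is a `Q`-polynomial completely regular code with respect to the eigenvalue
`θ t`: there is an ordering `Spec C = {θ 0, θ (σ 1), …, θ (σ ρ)}` with `σ 1 = t`
such that the entrywise `p`-th power of `u = E t x` lies in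
`V_{σ 0} + ⋯ + V_{σ p}` for all `0 ≤ p ≤ ρ`. -/
def IsQPolyCodeWrt [Fintype V] [DecidableEq V] (G : SimpleGraph V) [DecidableRel G.Adj]
    (D ρ : ℕ) (θ : Fin (D + 1) → ℝ) (E : Fin (D + 1) → Matrix V V ℂ)
    (γ α β : ℕ → ℕ) (C : Finset V) (t : Fin (D + 1)) : Prop :=
  ∃ σ : Fin (ρ + 1) → Fin (D + 1), σ 0 = 0 ∧ Function.Injective σ ∧ σ 1 = t ∧
    spectrum ℂ (quotientMatrix ℂ γ α β ρ) = Set.range (fun j => (θ (σ j) : ℂ)) ∧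
    ∀ p : Fin (ρ + 1), (fun v => (E t *ᵥ charVec C) v ^ (p : ℕ)) ∈
      ⨆ (j : Fin (ρ + 1)) (_ : j ≤ p),
        Module.End.eigenspace (Matrix.mulVecLin (G.adjMatrix ℂ)) ((θ (σ j) : ℂ))

/-- `C` is a `Q`-polynomial completely regular code. -/
def IsQPolyCode [Fintype V] [DecidableEq V] (G : SimpleGraph V) [DecidableRel G.Adj]
    (D ρ : ℕ) (θ : Fin (D + 1) → ℝ) (E : Fin (D + 1) → Matrix V V ℂ)
    (γ α β : ℕ → ℕ) (C : Finset V) : Prop :=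
  ∃ t : Fin (D + 1), IsQPolyCodeWrt G D ρ θ E γ α β C t

/-- a translation graph on an abelian group: adjacency is invariant under translation -/
def IsTranslationGraph {X : Type*} [AddCommGroup X] (G : SimpleGraph X) : Prop :=
  ∀ x y z : X, G.Adj x y → G.Adj (x + z) (y + z)

/-- the coset graph of an additive code `C`: cosets `C'` and `C''` are adjacent if
`Γ` has an edge with one end in `C'` and the other in `C''` -/
def cosetGraph {X : Type*} [AddCommGroup X] (G : SimpleGraph X) (C : AddSubgroup X) :
    SimpleGraph (X ⧸ C) where
  Adj a b := a ≠ b ∧ ∃ x y : X,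
    QuotientAddGroup.mk x = a ∧ QuotientAddGroup.mk y = b ∧ G.Adj x y
  symm := ⟨fun a b ⟨hne, x, y, hx, hy, h⟩ => ⟨hne.symm, y, x, hy, hx, h.symm⟩⟩
  loopless := ⟨fun a ⟨hne, _⟩ => hne rfl⟩

/-- `G` is a `Q`-polynomial distance-regular graph: it is distance-regular and
admits an ordering of its primitive idempotents whose Krein parameters satisfy
the `Q`-polynomial condition -/
def IsQPolyDRG {W : Type*} [Fintype W] [DecidableEq W]
    (G : SimpleGraph W) [DecidableRel G.Adj] : Prop :=
  ∃ (k D : ℕ) (b c : ℕ → ℕ), IsDRG G k D b c ∧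
    ∃ (θ : Fin (D + 1) → ℝ) (E : Fin (D + 1) → Matrix W W ℂ)
      (q : Fin (D + 1) → Fin (D + 1) → Fin (D + 1) → ℝ),
      θ 0 = k ∧ PrimIdem (G.adjMatrix ℂ) D θ E ∧ KreinRel D E q ∧ QPolyKrein D q



/-! The cells `C_0, …, C_ρ` of the distance partition span an `A`-invariant subspace containing
`x = C_0`, on which `A` acts by the quotient matrix `U`. Each `E_j x` is a polynomial in `A`
applied to `x`, so the `ρ + 1` independent eigenvectors in `ℬ` span the same subspace: `Spec U`
consists of their eigenvalues, and the all-ones vector, an eigenvector for `k` in this subspace,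
is a multiple of `E_0 x`. Multiplying `u = E(θ) x` by this constant vector shows that the column
of the Leonard matrix indexed by `E_0 x` has its only nonzero entry in the row of `u`, so by
irreducibility `E_0 x` is an end of the ordering of `ℬ` and `u` is its neighbour. After
reversing the ordering if necessary, multiplication by `u` raises the index by at most one, so
`u^{(p)}` lies in `V_0 + V_{i_1} + ⋯ + V_{i_p}`. -/

section CodeDist

variable {G : SimpleGraph V} {C : Finset V} {ρ : ℕ}

lemma codeDist_le_dist {y : V} (hy : y ∈ C) (v : V) : codeDist G C v ≤ G.dist v y :=
  Nat.sInf_le ⟨y, hy, rfl⟩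

lemma exists_mem_dist_eq_codeDist (hC : C.Nonempty) (v : V) :
    ∃ y ∈ C, G.dist v y = codeDist G C v := by
  obtain ⟨y, hy⟩ := hC
  exact Nat.sInf_mem (s := {n | ∃ y ∈ C, G.dist v y = n}) ⟨G.dist v y, y, hy, rfl⟩

lemma codeDist_eq_zero_iff (hG : G.Connected) (hC : C.Nonempty) {v : V} :
    codeDist G C v = 0 ↔ v ∈ C := by
  refine ⟨fun h => ?_, fun h => by simpa using codeDist_le_dist (G := G) h v⟩
  obtain ⟨y, hy, hd⟩ := exists_mem_dist_eq_codeDist (G := G) hC v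
  rw [h, hG.dist_eq_zero_iff] at hd
  exact hd ▸ hy

lemma codeDist_le_codeDist_add_one (hG : G.Connected) (hC : C.Nonempty) {v z : V}
    (h : G.Adj v z) : codeDist G C z ≤ codeDist G C v + 1 := by
  obtain ⟨y, hy, hd⟩ := exists_mem_dist_eq_codeDist (G := G) hC v
  have hzy : G.dist z y ≤ G.dist z v + G.dist v y := hG.dist_triangle
  have hzv : G.dist z v = 1 := SimpleGraph.dist_eq_one_iff_adj.mpr h.symm
  have := codeDist_le_dist (G := G) hy z
  omega

lemma cellVec_zero_eq_charVec [DecidableEq V] (hG : G.Connected) (hC : C.Nonempty) :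
    cellVec G C 0 = charVec C := by
  funext v
  simp only [cellVec, charVec, codeDist_eq_zero_iff hG hC]

lemma sum_smul_cellVec_apply (hcov : ∀ v, codeDist G C v ≤ ρ) (w : Fin (ρ + 1) → ℂ)
    (v : V) :
    (∑ i : Fin (ρ + 1), w i • cellVec G C i) v =
      w ⟨codeDist G C v, Nat.lt_succ_of_le (hcov v)⟩ := by
  rw [Finset.sum_apply, Finset.sum_eq_single_of_mem
    (⟨codeDist G C v, Nat.lt_succ_of_le (hcov v)⟩ : Fin (ρ + 1)) (Finset.mem_univ _)]
  · simp [cellVec]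
  · intro i _ hi
    have : codeDist G C v ≠ i := fun h => hi (Fin.ext h.symm)
    simp [cellVec, this]

lemma sum_cellVec (hcov : ∀ v, codeDist G C v ≤ ρ) :
    ∑ i : Fin (ρ + 1), cellVec G C i = 1 := by
  funext v
  simpa using sum_smul_cellVec_apply hcov 1 v

end CodeDist

section Cells

variable [Fintype V] {G : SimpleGraph V} [DecidableRel G.Adj] {C : Finset V} {ρ : ℕ}
  {γ α β : ℕ → ℕ}

lemma adjMatrix_mulVec_cellVec_apply (j : ℕ) (v : V) :
    (G.adjMatrix ℂ *ᵥ cellVec G C j) v = nbrsInCell G C j v := by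
  simp [SimpleGraph.adjMatrix_mulVec_apply, cellVec, nbrsInCell, Finset.sum_boole,
    Finset.filter_filter, SimpleGraph.neighborFinset_eq_filter]

lemma nbrsInCell_eq_zero (hG : G.Connected) (hC : C.Nonempty) {j : ℕ} {v : V}
    (h : codeDist G C v + 1 < j ∨ j + 1 < codeDist G C v) : nbrsInCell G C j v = 0 := by
  rw [nbrsInCell, Finset.card_eq_zero, Finset.filter_eq_empty_iff]
  rintro z - ⟨hvz, rfl⟩
  have := codeDist_le_codeDist_add_one hG hC hvz
  have := codeDist_le_codeDist_add_one hG hC hvz.symm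
  omega

lemma IsCRC.nbrsInCell_eq (hC : IsCRC G C ρ γ α β) (hG : G.Connected) (v : V)
    (j : Fin (ρ + 1)) :
    (nbrsInCell G C j v : ℂ) =
      quotientMatrix ℂ γ α β ρ ⟨codeDist G C v, Nat.lt_succ_of_le (hC.2.1 v)⟩ j := by
  obtain ⟨hne, hcov, -, hγ, hα, hβ⟩ := hC
  have hv := hcov v
  have hj := j.isLt
  simp only [quotientMatrix, Matrix.of_apply]
  split_ifs with h1 h2 h3
  · rw [show (j : ℕ) = codeDist G C v - 1 by omega, hγ _ (by omega) hv v rfl]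
  · rw [← h2, hα _ hv v rfl]
  · rw [h3, hβ _ hv v rfl]
  · rw [nbrsInCell_eq_zero hG hne (by omega), Nat.cast_zero]

lemma IsCRC.adjMatrix_mulVec_cellVec (hC : IsCRC G C ρ γ α β) (hG : G.Connected)
    (j : Fin (ρ + 1)) :
    G.adjMatrix ℂ *ᵥ cellVec G C j =
      ∑ i : Fin (ρ + 1), quotientMatrix ℂ γ α β ρ i j • cellVec G C i := by
  funext v
  rw [adjMatrix_mulVec_cellVec_apply, sum_smul_cellVec_apply hC.2.1 (fun i => _),
    hC.nbrsInCell_eq hG]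

end Cells

section LinearAlgebra

open Polynomial Submodule

variable {K M ι : Type*} [Field K] [AddCommGroup M] [Module K M]

lemma apply_mem_span_of_apply_eq_sum [Fintype ι] {f : Module.End K M} {c : ι → M}
    {U : Matrix ι ι K} (hU : ∀ j, f (c j) = ∑ i, U i j • c i) :
    ∀ w ∈ span K (Set.range c), f w ∈ span K (Set.range c) := by
  refine fun w hw => (span_le (p := (span K (Set.range c)).comap f)).mpr ?_ hw
  rintro _ ⟨j, rfl⟩
  rw [SetLike.mem_coe, mem_comap, hU]
  exact sum_mem fun i _ => smul_mem _ _ (subset_span ⟨i, rfl⟩)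

lemma aeval_apply_mem {f : Module.End K M} {W : Submodule K M} (hW : ∀ w ∈ W, f w ∈ W)
    (p : K[X]) {w : M} (hw : w ∈ W) : aeval f p w ∈ W := by
  induction p using Polynomial.induction_on with
  | C a => simpa [Module.algebraMap_end_apply] using W.smul_mem a hw
  | add p q hp hq => rw [map_add, LinearMap.add_apply]; exact W.add_mem hp hq
  | monomial n a ih =>
    rw [pow_succ', mul_left_comm, map_mul, aeval_X, Module.End.mul_apply]
    exact hW _ ih

/-- `v j` is obtained by applying to `∑ l, v l` a polynomial in `f`: Lagrange interpolation
at the `μ l`. -/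
lemma mem_of_sum_mem_of_apply_eq_smul [Fintype ι] [DecidableEq ι] {f : Module.End K M}
    {W : Submodule K M} (hW : ∀ w ∈ W, f w ∈ W) {μ : ι → K} (hμ : Function.Injective μ)
    {v : ι → M} (hfv : ∀ l, f (v l) = μ l • v l) (hsum : ∑ l, v l ∈ W) (j : ι) :
    v j ∈ W := by
  set p : K[X] := ∏ i ∈ Finset.univ.erase j, (X - C (μ i))
  have hp : ∀ l, p.eval (μ l) = 0 ↔ l ≠ j := by
    intro l
    simp [p, eval_prod, Finset.prod_eq_zero_iff, sub_eq_zero, hμ.eq_iff]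
  have hpv : aeval f p (∑ l, v l) = p.eval (μ j) • v j := by
    rw [map_sum, Finset.sum_eq_single j]
    · exact Module.End.aeval_apply_of_mem_apply_eq_smul (hfv j)
    · intro l _ hl
      rw [Module.End.aeval_apply_of_mem_apply_eq_smul (hfv l), (hp l).2 hl, zero_smul]
    · simp
  have hpj : p.eval (μ j) ≠ 0 := fun h => (hp j).1 h rfl
  simpa [hpv, hpj] using W.smul_mem (p.eval (μ j))⁻¹ (aeval_apply_mem hW p hsum)

lemma LinearIndependent.span_eq_of_le [Fintype ι] {v c : ι → M} (hv : LinearIndependent K v)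
    (hle : span K (Set.range v) ≤ span K (Set.range c)) :
    span K (Set.range v) = span K (Set.range c) :=
  haveI := FiniteDimensional.span_of_finite K (Set.finite_range c)
  eq_of_le_of_finrank_le hle ((finrank_range_le_card c).trans (finrank_span_eq_card hv).ge)

lemma LinearIndependent.of_span_eq [Fintype ι] {v c : ι → M} (hv : LinearIndependent K v)
    (h : span K (Set.range v) = span K (Set.range c)) : LinearIndependent K c := by
  rw [linearIndependent_iff_card_eq_finrank_span, Set.finrank, ← h, finrank_span_eq_card hv]

lemma exists_mem_span_singleton_of_mem_span_eigenvectors [Fintype ι] {f : Module.End K M}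
    {v : ι → M} (hv : LinearIndependent K v) {μ : ι → K} (hμ : Function.Injective μ)
    (hfv : ∀ l, f (v l) = μ l • v l) {y : M} (hy : y ∈ span K (Set.range v)) (hy0 : y ≠ 0)
    {a : K} (hfy : f y = a • y) : ∃ m, μ m = a ∧ y ∈ K ∙ v m := by
  obtain ⟨d, rfl⟩ := (mem_span_range_iff_exists_fun K).mp hy
  have hcoeff : ∀ l, d l ≠ 0 → μ l = a := by
    have h1 : ∑ l, (d l * μ l) • v l = f (∑ l, d l • v l) := by
      simp [map_sum, hfv, mul_smul]
    have h2 : ∑ l, (d l * a) • v l = a • ∑ l, d l • v l := by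
      simp [Finset.smul_sum, mul_comm _ a, mul_smul]
    have h0 : ∑ l, (d l * (μ l - a)) • v l = 0 := by
      simp only [mul_sub, sub_smul, Finset.sum_sub_distrib, h1, h2, hfy, sub_self]
    intro l hl
    have := Fintype.linearIndependent_iff.mp hv _ h0 l
    exact sub_eq_zero.mp ((mul_eq_zero.mp this).resolve_left hl)
  obtain ⟨m, hm⟩ : ∃ m, d m ≠ 0 := by
    by_contra! h
    exact hy0 (by simp [h])
  refine ⟨m, hcoeff m hm, ?_⟩
  rw [Finset.sum_eq_single m (fun l _ hl => ?_) (by simp)]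
  · exact smul_mem _ _ (mem_span_singleton_self _)
  · by_contra h
    exact hl (hμ ((hcoeff l (left_ne_zero_of_smul h)).trans (hcoeff m hm).symm))

/-- On the common span of `c` and `v`, `U` is the matrix of `f` in the basis `c`, while in the
eigenbasis `v` the matrix of `f` is diagonal with entries `μ`. -/
lemma spectrum_eq_range_of_eigenbasis {n : Type*} [Fintype ι] [DecidableEq ι] [Fintype n]
    [DecidableEq n] {f : Module.End K M} {c : n → M} (hc : LinearIndependent K c)
    {U : Matrix n n K} (hU : ∀ j, f (c j) = ∑ i, U i j • c i) {v : ι → M}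
    (hv : LinearIndependent K v) {μ : ι → K} (hfv : ∀ l, f (v l) = μ l • v l)
    (hspan : span K (Set.range v) = span K (Set.range c)) : spectrum K U = Set.range μ := by
  set g := f.restrict (apply_mem_span_of_apply_eq_sum hU)
  set bc := Module.Basis.span hc
  set bv := (Module.Basis.span hv).map (LinearEquiv.ofEq _ _ hspan)
  have hgc : LinearMap.toMatrix bc bc g = U := by
    ext i j
    have : g (bc j) = ∑ i, U i j • bc i := Subtype.ext (by simp [g, bc, hU])
    rw [LinearMap.toMatrix_apply, this, Module.Basis.repr_sum_self]
  have hgv : LinearMap.toMatrix bv bv g = Matrix.diagonal μ := by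
    ext i j
    have : g (bv j) = μ j • bv j := Subtype.ext (by simp [g, bv, hfv])
    rw [LinearMap.toMatrix_apply, this, map_smul, Module.Basis.repr_self, Matrix.diagonal_apply]
    rcases eq_or_ne i j with rfl | hij <;> simp [*]
  rw [← hgc, LinearMap.spectrum_toMatrix, ← LinearMap.spectrum_toMatrix g bv, hgv,
    spectrum_diagonal]

lemma pow_mem_span_of_upperHessenberg {R : Type*} [CommRing R] [Algebra K R] {n : ℕ}
    {v : Fin (n + 1) → R} {u : R} {N : Matrix (Fin (n + 1)) (Fin (n + 1)) K}
    (hN : ∀ l j : Fin (n + 1), (j : ℕ) + 1 < l → N l j = 0)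
    (hu : ∀ j, u * v j = ∑ l, N l j • v l) (h1 : (1 : R) ∈ K ∙ v 0) (p : ℕ) :
    u ^ p ∈ span K (v '' {l | (l : ℕ) ≤ p}) := by
  induction p with
  | zero =>
    refine span_mono ?_ (by simpa using h1)
    simp
  | succ p ih =>
    have hmul : (span K (v '' {l | (l : ℕ) ≤ p})).map (LinearMap.mulLeft K u) ≤
        span K (v '' {l | (l : ℕ) ≤ p + 1}) := by
      rw [map_span_le]
      rintro _ ⟨j, hj : (j : ℕ) ≤ p, rfl⟩
      rw [LinearMap.mulLeft_apply, hu]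
      refine sum_mem fun l _ => ?_
      by_cases hl : (l : ℕ) ≤ p + 1
      · exact smul_mem _ _ (subset_span ⟨l, hl, rfl⟩)
      · rw [hN l j (by omega), zero_smul]
        exact zero_mem _
    rw [pow_succ']
    exact hmul (mem_map_of_mem ih)

end LinearAlgebra

section Tridiagonal

lemma IrredTridiag.submatrix_rev {n : ℕ} {F : Type*} [Zero F] {N : Matrix (Fin n) (Fin n) F}
    (hN : IrredTridiag N) : IrredTridiag (N.submatrix Fin.rev Fin.rev) := by
  have hrev : ∀ i j : Fin n,
      (((i.rev : ℕ) : ℤ) - ((j.rev : ℕ) : ℤ)).natAbs =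
        (((i : ℕ) : ℤ) - ((j : ℕ) : ℤ)).natAbs := by
    intro i j
    simp only [Fin.val_rev]
    omega
  exact ⟨fun i j h => hN.1 _ _ (by rwa [hrev]), fun i j h => hN.2 _ _ (by rwa [hrev])⟩

/-- As `v m` is a nonzero constant, the `m`-th column of `N` is the coordinate vector of a
multiple of `v t`, so its only nonzero entry is in row `t`. -/
lemma IrredTridiag.eq_of_natAbs_sub_eq_one {K R : Type*} [Field K] [CommRing R] [Algebra K R]
    {n : ℕ} {v : Fin n → R} (hv : LinearIndependent K v)
    {N : Matrix (Fin n) (Fin n) K} (hN : IrredTridiag N) {m t : Fin n}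
    (hone : (1 : R) ∈ K ∙ v m) (hrel : v t * v m = ∑ l, N l m • v l) {l : Fin n}
    (hl : (((l : ℕ) : ℤ) - ((m : ℕ) : ℤ)).natAbs = 1) : l = t := by
  obtain ⟨d, hd⟩ := Submodule.mem_span_singleton.mp hone
  have hd0 : d ≠ 0 := by
    rintro rfl
    apply hv.ne_zero m
    rw [← mul_one (v m), ← hd, zero_smul, mul_zero]
  have hvm : v m = d⁻¹ • 1 := by rw [← hd, smul_smul, inv_mul_cancel₀ hd0, one_smul]
  have hcol : ∑ l, (N l m - Pi.single (M := fun _ => K) t d⁻¹ l) • v l = 0 := by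
    simp only [sub_smul, Finset.sum_sub_distrib, ← hrel, Pi.single_apply, ite_smul, zero_smul,
      Finset.sum_ite_eq', Finset.mem_univ, if_true, hvm, mul_smul_comm, mul_one, sub_self]
  by_contra hlt
  have := Fintype.linearIndependent_iff.mp hv _ hcol l
  rw [Pi.single_eq_of_ne hlt, sub_zero] at this
  exact hN.2 l m hl this

lemma eq_zero_and_eq_one_or_eq_last_of_unique_neighbour {n : ℕ} {m t : Fin (n + 1)}
    (hmt : m ≠ t)
    (h : ∀ l : Fin (n + 1), (((l : ℕ) : ℤ) - ((m : ℕ) : ℤ)).natAbs = 1 → l = t) :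
    ((m : ℕ) = 0 ∧ (t : ℕ) = 1) ∨ ((m : ℕ) = n ∧ (t : ℕ) + 1 = n) := by
  have hm := m.isLt
  have ht := t.isLt
  have hmt' : (m : ℕ) ≠ t := Fin.val_ne_of_ne hmt
  by_cases hm0 : (m : ℕ) = 0
  · have := h ⟨1, by omega⟩ (by simp only; omega)
    exact Or.inl ⟨hm0, by rw [← this]⟩
  by_cases hmn : (m : ℕ) = n
  · have := h ⟨n - 1, by omega⟩ (by simp only; omega)
    exact Or.inr ⟨hmn, by rw [← this]; simp only; omega⟩
  have hlo := h ⟨m - 1, by omega⟩ (by simp only; omega)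
  have hhi := h ⟨m + 1, by omega⟩ (by simp only; omega)
  have := congrArg Fin.val (hlo.trans hhi.symm)
  simp only at this
  omega

end Tridiagonal

section PrimitiveIdempotents

open Submodule

variable [Fintype V] [DecidableEq V] {A : Matrix V V ℂ} {D : ℕ} {θ : Fin (D + 1) → ℝ}
  {E : Fin (D + 1) → Matrix V V ℂ}

lemma PrimIdem.mulVec_mulVec_eq_smul (hE : PrimIdem A D θ E) (j : Fin (D + 1)) (y : V → ℂ) :
    A *ᵥ (E j *ᵥ y) = (θ j : ℂ) • (E j *ᵥ y) := by
  rw [Matrix.mulVec_mulVec, hE.2.2.2.1 j, smul_mulVec]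

lemma PrimIdem.sum_mulVec (hE : PrimIdem A D θ E) (y : V → ℂ) : ∑ j, E j *ᵥ y = y := by
  rw [← Matrix.sum_mulVec, hE.2.2.2.2.1, one_mulVec]

lemma PrimIdem.injective_ofReal (hE : PrimIdem A D θ E) :
    Function.Injective fun j => (θ j : ℂ) :=
  Complex.ofReal_injective.comp hE.1

lemma PrimIdem.linearIndependent_mulVec {ι : Type*} (hE : PrimIdem A D θ E)
    {σ : ι → Fin (D + 1)} (hσ : Function.Injective σ) {y : V → ℂ}
    (hy : ∀ l, E (σ l) *ᵥ y ≠ 0) : LinearIndependent ℂ fun l => E (σ l) *ᵥ y :=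
  Module.End.eigenvectors_linearIndependent' A.mulVecLin _ (hE.injective_ofReal.comp hσ) _
    fun l => ⟨Module.End.mem_eigenspace_iff.mpr (hE.mulVec_mulVec_eq_smul _ _), hy l⟩

lemma PrimIdem.mulVec_mem (hE : PrimIdem A D θ E) {W : Submodule ℂ (V → ℂ)}
    (hW : ∀ w ∈ W, A *ᵥ w ∈ W) {y : V → ℂ} (hy : y ∈ W) (j : Fin (D + 1)) :
    E j *ᵥ y ∈ W :=
  mem_of_sum_mem_of_apply_eq_smul (f := A.mulVecLin) hW hE.injective_ofReal
    (fun l => hE.mulVec_mulVec_eq_smul l y) (by rwa [hE.sum_mulVec]) j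

variable {G : SimpleGraph V} [DecidableRel G.Adj] {C : Finset V} {ρ : ℕ} {γ α β : ℕ → ℕ}

lemma IsCRC.mulVec_charVec_mem_span (hC : IsCRC G C ρ γ α β) (hG : G.Connected)
    (hE : PrimIdem (G.adjMatrix ℂ) D θ E) (j : Fin (D + 1)) :
    E j *ᵥ charVec C ∈ span ℂ (Set.range fun i : Fin (ρ + 1) => cellVec G C i) := by
  refine hE.mulVec_mem (apply_mem_span_of_apply_eq_sum (f := (G.adjMatrix ℂ).mulVecLin)
    (hC.adjMatrix_mulVec_cellVec hG)) ?_ j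
  rw [← cellVec_zero_eq_charVec hG hC.1]
  exact subset_span ⟨0, rfl⟩

variable {σ : Fin (ρ + 1) → Fin (D + 1)}

lemma IsCRC.span_mulVec_charVec_eq (hC : IsCRC G C ρ γ α β) (hG : G.Connected)
    (hE : PrimIdem (G.adjMatrix ℂ) D θ E) (hσ : Function.Injective σ)
    (hv0 : ∀ l, E (σ l) *ᵥ charVec C ≠ 0) :
    span ℂ (Set.range fun l => E (σ l) *ᵥ charVec C) =
      span ℂ (Set.range fun i : Fin (ρ + 1) => cellVec G C i) :=
  (hE.linearIndependent_mulVec hσ hv0).span_eq_of_le <| span_le.mpr <|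
    Set.range_subset_iff.mpr fun l => hC.mulVec_charVec_mem_span hG hE (σ l)

lemma IsCRC.spectrum_quotientMatrix (hC : IsCRC G C ρ γ α β) (hG : G.Connected)
    (hE : PrimIdem (G.adjMatrix ℂ) D θ E) (hσ : Function.Injective σ)
    (hv0 : ∀ l, E (σ l) *ᵥ charVec C ≠ 0) :
    spectrum ℂ (quotientMatrix ℂ γ α β ρ) = Set.range fun l => (θ (σ l) : ℂ) :=
  have hspan := hC.span_mulVec_charVec_eq hG hE hσ hv0
  have hv := hE.linearIndependent_mulVec hσ hv0
  spectrum_eq_range_of_eigenbasis (f := (G.adjMatrix ℂ).mulVecLin) (hv.of_span_eq hspan)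
    (hC.adjMatrix_mulVec_cellVec hG) hv (fun _ => hE.mulVec_mulVec_eq_smul _ _) hspan

lemma IsCRC.exists_one_mem_span_singleton (hC : IsCRC G C ρ γ α β) (hG : G.Connected) {k : ℕ}
    (hdeg : ∀ v, G.degree v = k) (hθ0 : θ 0 = k) (hE : PrimIdem (G.adjMatrix ℂ) D θ E)
    (hσ : Function.Injective σ) (hv0 : ∀ l, E (σ l) *ᵥ charVec C ≠ 0) :
    ∃ m, σ m = 0 ∧ (1 : V → ℂ) ∈ ℂ ∙ (E (σ m) *ᵥ charVec C) := by
  have : Nonempty V := ⟨hC.1.choose⟩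
  have hone : (1 : V → ℂ) ∈ span ℂ (Set.range fun l => E (σ l) *ᵥ charVec C) := by
    rw [hC.span_mulVec_charVec_eq hG hE hσ hv0, ← sum_cellVec hC.2.1]
    exact sum_mem fun i _ => subset_span ⟨i, rfl⟩
  have hA1 : (G.adjMatrix ℂ).mulVecLin 1 = (θ 0 : ℂ) • 1 := by
    funext x
    simp [SimpleGraph.adjMatrix_mulVec_apply, hdeg x, hθ0]
  obtain ⟨m, hm, hm1⟩ := exists_mem_span_singleton_of_mem_span_eigenvectors
    (hE.linearIndependent_mulVec hσ hv0) (hE.injective_ofReal.comp hσ)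
    (fun _ => hE.mulVec_mulVec_eq_smul _ _) hone one_ne_zero hA1
  exact ⟨m, hE.injective_ofReal hm, hm1⟩

lemma isQPolyCodeWrt_of_ordering (hE : PrimIdem (G.adjMatrix ℂ) D θ E)
    {τ : Fin (ρ + 1) → Fin (D + 1)} (hτ : Function.Injective τ) (hτ0 : τ 0 = 0)
    (hspec : spectrum ℂ (quotientMatrix ℂ γ α β ρ) = Set.range fun j => (θ (τ j) : ℂ))
    {N : Matrix (Fin (ρ + 1)) (Fin (ρ + 1)) ℂ} (hN : IrredTridiag N)
    (hrel : ∀ j, (E (τ 1) *ᵥ charVec C) * (E (τ j) *ᵥ charVec C) =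
      ∑ l, N l j • (E (τ l) *ᵥ charVec C))
    (hone : (1 : V → ℂ) ∈ ℂ ∙ (E (τ 0) *ᵥ charVec C)) :
    IsQPolyCodeWrt G D ρ θ E γ α β C (τ 1) := by
  refine ⟨τ, hτ0, hτ, rfl, hspec, fun p => ?_⟩
  refine span_le.mpr ?_
    (pow_mem_span_of_upperHessenberg (fun l j h => hN.1 l j (by omega)) hrel hone p)
  rintro _ ⟨l, hl, rfl⟩
  exact mem_iSup_of_mem l <| mem_iSup_of_mem hl <|
    Module.End.mem_eigenspace_iff.mpr (hE.mulVec_mulVec_eq_smul _ _)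

end PrimitiveIdempotents

theorem stmt14 {V : Type*} [Fintype V] [DecidableEq V]
    (G : SimpleGraph V) [DecidableRel G.Adj] (k D : ℕ) (b c : ℕ → ℕ)
    (hG : IsDRG G k D b c)
    (θ : Fin (D + 1) → ℝ) (hθ0 : θ 0 = k)
    (E : Fin (D + 1) → Matrix V V ℂ) (hPI : PrimIdem (G.adjMatrix ℂ) D θ E)
    (C : Finset V) (ρ : ℕ) (γ α β : ℕ → ℕ)
    (hC : IsCRC G C ρ γ α β)
    (hL : IsLeonard D ρ E C) :
    IsQPolyCode G D ρ θ E γ α β C := by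
  obtain ⟨t, ht0, hu, σ, hσ, hσrange, N, hN, hrel⟩ := hL
  have hv0 : ∀ l, E (σ l) *ᵥ charVec C ≠ 0 := fun l => (hσrange _).mpr ⟨l, rfl⟩
  have hspec := hC.spectrum_quotientMatrix hG.1 hPI hσ hv0
  obtain ⟨m, hm0, hm1⟩ := hC.exists_one_mem_span_singleton hG.1 hG.2.1 hθ0 hPI hσ hv0
  obtain ⟨t', rfl⟩ := (hσrange t).mp hu
  have ht'lt := t'.isLt
  rcases eq_zero_and_eq_one_or_eq_last_of_unique_neighbour (fun h => ht0 (by rwa [← h]))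
    fun l hl => hN.eq_of_natAbs_sub_eq_one (hPI.linearIndependent_mulVec hσ hv0) hm1 (hrel m) hl
    with ⟨hm', ht'⟩ | ⟨hm', ht'⟩
  · obtain rfl : m = 0 := Fin.ext hm'
    obtain rfl : t' = 1 := Fin.ext (by rw [ht', Fin.val_one', Nat.mod_eq_of_lt (by omega)])
    exact ⟨_, isQPolyCodeWrt_of_ordering hPI hσ hm0 hspec hN hrel hm1⟩
  · obtain rfl : m = Fin.rev 0 := Fin.ext (by simp [hm'])
    obtain rfl : t' = Fin.rev 1 :=
      Fin.ext (by rw [Fin.val_rev, Fin.val_one', Nat.mod_eq_of_lt (by omega)]; omega)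
    refine ⟨_, isQPolyCodeWrt_of_ordering hPI (hσ.comp Fin.rev_injective) hm0 ?_
      hN.submatrix_rev (fun j => (hrel j.rev).trans (Equiv.sum_comp Fin.revPerm _).symm) hm1⟩
    rw [hspec]
    exact (Fin.rev_surjective.range_comp _).symm
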